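/- arXiv:2603.10336 — 3 statements merged into one kernel-verified Lean document; each statement's English description precedes it below -/
import Mathlib

section
/- Monotonicity of the coupled Hamiltonian–transport block: suppose each g_{i,j} is continuously differentiable and convex on ℝ⁴, and let M, M̃ be grid functions with M_{i,j} ≥ 0 and M̃_{i,j} ≥ 0 for all i,j. Then for all grid functions U, Ũ: ⟨g(·,[D_h Ũ]) − g(·,[D_h U]), M − M̃⟩_h + ⟨B_h(U,M) − B_h(Ũ,M̃), U − Ũ⟩_h ≥ 0, where g(·,[D_h W]) denotes the grid function (i,j) ↦ g_{i,j}([D_h W]_{i,j}). If, in addition, each g_{i,j} is strictly convex, M and M̃ are strictly positive componentwise, and [D_h U]_{i,j} ≠ [D_h Ũ]_{i,j} for some node (i,j), then the inequality is strict. -/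
/-!
Summation by parts on the torus makes `D₁⁻` minus the adjoint of `D₁⁺` (and likewise in the second
direction), so `⟨B_h(U, M), W⟩_h = ⟨M, dg(D_h U)(D_h W)⟩_h`. Taking `W = U - Ũ`, the left-hand side
regroups node by node into `⟨M, d_g(D_h U, D_h Ũ)⟩_h + ⟨M̃, d_g(D_h Ũ, D_h U)⟩_h`, where
`d_g(x, y) = g y - g x - dg(x)(y - x)` is the Bregman divergence of `g`. It is nonnegative for
convex `g`, and positive at `x ≠ y` for strictly convex `g`.
-/

open scoped BigOperators

/-- Grid functions on the periodic `N × N` grid `(ℤ/Nℤ)²`. -/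
abbrev Grid (N : ℕ) : Type := ZMod N → ZMod N → ℝ

/-- Mesh size `h = 1/N`. -/
noncomputable def gridh (N : ℕ) : ℝ := 1 / N

/-- Discrete pairing `⟨a,b⟩_h = h² ∑_{i,j} a_{ij} b_{ij}`. -/
noncomputable def pairh (N : ℕ) [NeZero N] (a b : Grid N) : ℝ :=
  gridh N ^ 2 * ∑ i : ZMod N, ∑ j : ZMod N, a i j * b i j

/-- One-sided difference `(D₁⁺ y)_{ij} = (y_{i+1,j} - y_{ij}) / h`. -/
noncomputable def D1p (N : ℕ) (y : Grid N) : Grid N := fun i j => (y (i + 1) j - y i j) / gridh N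

/-- One-sided difference `(D₁⁻ y)_{ij} = (y_{ij} - y_{i-1,j}) / h`. -/
noncomputable def D1m (N : ℕ) (y : Grid N) : Grid N := fun i j => (y i j - y (i - 1) j) / gridh N

/-- One-sided difference `(D₂⁺ y)_{ij} = (y_{i,j+1} - y_{ij}) / h`. -/
noncomputable def D2p (N : ℕ) (y : Grid N) : Grid N := fun i j => (y i (j + 1) - y i j) / gridh N

/-- One-sided difference `(D₂⁻ y)_{ij} = (y_{ij} - y_{i,j-1}) / h`. -/
noncomputable def D2m (N : ℕ) (y : Grid N) : Grid N := fun i j => (y i j - y i (j - 1)) / gridh N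

/-- Five-point discrete Laplacian. -/
noncomputable def lapFD (N : ℕ) (y : Grid N) : Grid N :=
  fun i j => -(4 * y i j - y (i + 1) j - y (i - 1) j - y i (j + 1) - y i (j - 1)) / gridh N ^ 2

/-- Upwind stencil `[D_h y]_{ij} ∈ ℝ⁴`. -/
noncomputable def DHs (N : ℕ) (y : Grid N) (i j : ZMod N) : Fin 4 → ℝ :=
  ![D1p N y i j, D1m N y i j, D2p N y i j, D2m N y i j]

/-- `α^{(ℓ)}(U)_{ij} = (∂g_{ij}/∂q_ℓ)([D_h U]_{ij})`. -/
noncomputable def alphaFD (N : ℕ) (g : ZMod N → ZMod N → (Fin 4 → ℝ) → ℝ)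
    (U : Grid N) (l : Fin 4) : Grid N :=
  fun i j => fderiv ℝ (g i j) (DHs N U i j) (Pi.single l 1)

/-- Discrete transport operator `B_h(U, M)`. -/
noncomputable def Bh (N : ℕ) (g : ZMod N → ZMod N → (Fin 4 → ℝ) → ℝ) (U M : Grid N) : Grid N :=
  fun i j =>
    -D1m N (fun a b => M a b * alphaFD N g U 0 a b) i j
      - D1p N (fun a b => M a b * alphaFD N g U 1 a b) i j
      - D2m N (fun a b => M a b * alphaFD N g U 2 a b) i j
      - D2p N (fun a b => M a b * alphaFD N g U 3 a b) i j

/-- HJB residual block `r_k`. -/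
noncomputable def rkFD (N : ℕ) (g : ZMod N → ZMod N → (Fin 4 → ℝ) → ℝ) (f : ℝ → ℝ)
    (Vh : Grid N) (ν Δt : ℝ) (M U : ℕ → Grid N) (k : ℕ) : Grid N :=
  fun i j => (U k i j - U (k - 1) i j) / Δt + ν * lapFD N (U (k - 1)) i j
    - g i j (DHs N (U (k - 1)) i j) + f (M k i j) + Vh i j

/-- Fokker–Planck residual block `s_k`. -/
noncomputable def skFD (N : ℕ) (g : ZMod N → ZMod N → (Fin 4 → ℝ) → ℝ)
    (ν Δt : ℝ) (M U : ℕ → Grid N) (k : ℕ) : Grid N :=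
  fun i j => (M k i j - M (k - 1) i j) / Δt - ν * lapFD N (M k) i j
    + Bh N g (U (k - 1)) (M k) i j

/-- `r̄_k = ⟨M_k, r_k⟩_h / ⟨M_k, 1⟩_h`. -/
noncomputable def rbarFD (N : ℕ) [NeZero N] (g : ZMod N → ZMod N → (Fin 4 → ℝ) → ℝ) (f : ℝ → ℝ)
    (Vh : Grid N) (ν Δt : ℝ) (M U : ℕ → Grid N) (k : ℕ) : ℝ :=
  pairh N (M k) (rkFD N g f Vh ν Δt M U k) / pairh N (M k) (fun _ _ => 1)

/-- Entropy functional `E(Y)`. -/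
noncomputable def entE (N : ℕ) [NeZero N] (NT : ℕ) (Δt : ℝ) (M U : ℕ → Grid N) : ℝ :=
  Δt * ∑ k ∈ Finset.Icc 1 NT, pairh N (M k) (fun i j => Real.log (M k i j) - 1)
    + Δt / 2 * ∑ k ∈ Finset.range NT, pairh N (U k) (U k)

/-- Bregman divergence of the entropy, `D_E(Y*, Y)`. -/
noncomputable def DE (N : ℕ) [NeZero N] (NT : ℕ) (Δt : ℝ) (M' U' M U : ℕ → Grid N) : ℝ :=
  entE N NT Δt M' U' - entE N NT Δt M U
    - (Δt * ∑ k ∈ Finset.Icc 1 NT,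
        pairh N (fun i j => Real.log (M k i j)) (fun i j => M' k i j - M k i j)
      + Δt * ∑ k ∈ Finset.range NT, pairh N (U k) (fun i j => U' k i j - U k i j))

/-- The Hessian–Riemannian flow equations on a set `D` of artificial times. -/
def IsHRFOn (N : ℕ) [NeZero N] (NT : ℕ) (g : ZMod N → ZMod N → (Fin 4 → ℝ) → ℝ)
    (f : ℝ → ℝ) (Vh : Grid N) (ν Δt : ℝ)
    (Ms Us : ℝ → ℕ → Grid N) (D : Set ℝ) : Prop :=
  ∀ s ∈ D, ∀ k ∈ Finset.Icc 1 NT,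
    (∀ i j, HasDerivWithinAt (fun t => Ms t k i j)
      (-(Ms s k i j) * (rkFD N g f Vh ν Δt (Ms s) (Us s) k i j
        - rbarFD N g f Vh ν Δt (Ms s) (Us s) k)) D s) ∧
    (∀ i j, HasDerivWithinAt (fun t => Us t (k - 1) i j)
      (-(skFD N g ν Δt (Ms s) (Us s) k i j)) D s)

section Bregman

variable {E : Type*} [NormedAddCommGroup E] [NormedSpace ℝ E]

noncomputable def bregmanDiv (f : E → ℝ) (x y : E) : ℝ := f y - f x - fderiv ℝ f x (y - x)

theorem ConvexOn.fderiv_apply_sub_le {s : Set E} {f : E → ℝ} (hf : ConvexOn ℝ s f) {x y : E}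
    (hx : x ∈ s) (hy : y ∈ s) (hfx : DifferentiableAt ℝ f x) :
    fderiv ℝ f x (y - x) ≤ f y - f x := by
  let ℓ : ℝ →ᵃ[ℝ] E := AffineMap.lineMap x y
  have hderiv : HasDerivAt (f ∘ ℓ) (fderiv ℝ f x (y - x)) 0 := by
    have hfℓ : HasFDerivAt f (fderiv ℝ f x) (ℓ 0) := by
      simpa [ℓ] using hfx.hasFDerivAt
    exact hfℓ.comp_hasDerivAt 0 AffineMap.hasDerivAt_lineMap
  have := (hf.comp_affineMap ℓ).le_slope_of_hasDerivAt (by simpa [ℓ] using hx)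
    (by simpa [ℓ] using hy) one_pos hderiv
  simpa [slope_def_field, ℓ] using this

theorem ConvexOn.bregmanDiv_nonneg {s : Set E} {f : E → ℝ} (hf : ConvexOn ℝ s f) {x y : E}
    (hx : x ∈ s) (hy : y ∈ s) (hfx : DifferentiableAt ℝ f x) : 0 ≤ bregmanDiv f x y :=
  sub_nonneg.2 (hf.fderiv_apply_sub_le hx hy hfx)

theorem StrictConvexOn.bregmanDiv_pos {s : Set E} {f : E → ℝ} (hf : StrictConvexOn ℝ s f)
    {x y : E} (hx : x ∈ s) (hy : y ∈ s) (hxy : x ≠ y) (hfx : DifferentiableAt ℝ f x) :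
    0 < bregmanDiv f x y := by
  have hmid : f (midpoint ℝ x y) < 2⁻¹ * f x + 2⁻¹ * f y := by
    simpa [midpoint_eq_smul_add] using
      hf.2 hx hy hxy (by norm_num : (0:ℝ) < 2⁻¹) (by norm_num : (0:ℝ) < 2⁻¹) (by norm_num)
  have htangent := hf.convexOn.fderiv_apply_sub_le hx
    (hf.1.segment_subset hx hy (midpoint_mem_segment x y)) hfx
  rw [midpoint_sub_left, map_smul, smul_eq_mul, invOf_eq_inv] at htangent
  rw [bregmanDiv]
  linarith

end Bregman

section Grid

variable {N : ℕ} [NeZero N]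

theorem gridh_pos : 0 < gridh N := by
  have : (0 : ℝ) < N := by exact_mod_cast Nat.pos_of_ne_zero (NeZero.ne N)
  simpa [gridh] using this

theorem pairh_comm (a b : Grid N) : pairh N a b = pairh N b a := by
  simp only [pairh, mul_comm (a _ _)]

theorem pairh_neg_left (a b : Grid N) : pairh N (-a) b = -pairh N a b := by
  simp [pairh]

theorem pairh_sub_left (a b c : Grid N) : pairh N (a - b) c = pairh N a c - pairh N b c := by
  simp [pairh, sub_mul, mul_sub]

theorem pairh_add_right (a b c : Grid N) : pairh N a (b + c) = pairh N a b + pairh N a c := by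
  simp [pairh, mul_add, Finset.sum_add_distrib]

theorem pairh_mul_left (a b c : Grid N) : pairh N (a * b) c = pairh N a (b * c) := by
  simp [pairh, mul_assoc]

theorem pairh_nonneg {a b : Grid N} (ha : ∀ i j, 0 ≤ a i j) (hb : ∀ i j, 0 ≤ b i j) :
    0 ≤ pairh N a b :=
  mul_nonneg (sq_nonneg _) (Finset.sum_nonneg fun i _ => Finset.sum_nonneg fun j _ =>
    mul_nonneg (ha i j) (hb i j))

theorem pairh_pos {a b : Grid N} (ha : ∀ i j, 0 ≤ a i j) (hb : ∀ i j, 0 ≤ b i j) {i j : ZMod N}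
    (hai : 0 < a i j) (hbi : 0 < b i j) : 0 < pairh N a b := by
  refine mul_pos (pow_pos gridh_pos 2) (Finset.sum_pos' (fun i _ => Finset.sum_nonneg
    fun j _ => mul_nonneg (ha i j) (hb i j)) ⟨i, Finset.mem_univ _, ?_⟩)
  exact Finset.sum_pos' (fun j _ => mul_nonneg (ha i j) (hb i j))
    ⟨j, Finset.mem_univ _, mul_pos hai hbi⟩

theorem pairh_D1m_left (a w : Grid N) : pairh N (D1m N a) w = -pairh N a (D1p N w) := by
  have hshift : ∑ i, ∑ j, a (i - 1) j * w i j = ∑ i, ∑ j, a i j * w (i + 1) j := by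
    simpa using
      (Equiv.sum_comp (Equiv.addRight (1 : ZMod N)) fun i => ∑ j, a (i - 1) j * w i j).symm
  rw [eq_neg_iff_add_eq_zero, pairh, pairh, ← mul_add, ← Finset.sum_add_distrib]
  have hnode : ∀ i j, (a i j - a (i - 1) j) / gridh N * w i j
      + a i j * ((w (i + 1) j - w i j) / gridh N) = (a i j * w (i + 1) j - a (i - 1) j * w i j) / gridh N := fun i j => by ring
  simp only [← Finset.sum_add_distrib, D1m, D1p, hnode, ← Finset.sum_div, Finset.sum_sub_distrib,
    hshift, sub_self, zero_div, mul_zero]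

theorem pairh_D2m_left (a w : Grid N) : pairh N (D2m N a) w = -pairh N a (D2p N w) := by
  have hshift : ∑ i, ∑ j, a i (j - 1) * w i j = ∑ i, ∑ j, a i j * w i (j + 1) :=
    Finset.sum_congr rfl fun i _ => by
      simpa using (Equiv.sum_comp (Equiv.addRight (1 : ZMod N)) fun j => a i (j - 1) * w i j).symm
  have hnode : ∀ i j, (a i j - a i (j - 1)) / gridh N * w i j
      + a i j * ((w i (j + 1) - w i j) / gridh N) = (a i j * w i (j + 1) - a i (j - 1) * w i j) / gridh N := fun i j => by ring
  rw [eq_neg_iff_add_eq_zero, pairh, pairh, ← mul_add, ← Finset.sum_add_distrib]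
  simp only [← Finset.sum_add_distrib, D2m, D2p, hnode, ← Finset.sum_div, Finset.sum_sub_distrib,
    hshift, sub_self, zero_div, mul_zero]

theorem pairh_D1p_left (a w : Grid N) : pairh N (D1p N a) w = -pairh N a (D1m N w) := by
  rw [pairh_comm a, pairh_D1m_left, neg_neg, pairh_comm]

theorem pairh_D2p_left (a w : Grid N) : pairh N (D2p N a) w = -pairh N a (D2m N w) := by
  rw [pairh_comm a, pairh_D2m_left, neg_neg, pairh_comm]

end Grid

section Transport

variable {N : ℕ} (g : ZMod N → ZMod N → (Fin 4 → ℝ) → ℝ)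

theorem DHs_sub (U U' : Grid N) (i j : ZMod N) :
    DHs N (U - U') i j = DHs N U i j - DHs N U' i j := by
  ext l
  fin_cases l <;> simp [DHs, D1p, D1m, D2p, D2m] <;> ring

theorem fderiv_apply_DHs (U W : Grid N) (i j : ZMod N) :
    fderiv ℝ (g i j) (DHs N U i j) (DHs N W i j)
      = alphaFD N g U 0 i j * D1p N W i j + alphaFD N g U 1 i j * D1m N W i j
        + alphaFD N g U 2 i j * D2p N W i j + alphaFD N g U 3 i j * D2m N W i j := by
  conv_lhs => rw [pi_eq_sum_univ' (DHs N W i j)]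
  simp [Fin.sum_univ_four, DHs, alphaFD, mul_comm]

variable [NeZero N]

theorem pairh_Bh_left (U M W : Grid N) :
    pairh N (Bh N g U M) W
      = pairh N M (fun i j => fderiv ℝ (g i j) (DHs N U i j) (DHs N W i j)) := by
  calc pairh N (Bh N g U M) W
      = -pairh N (D1m N (M * alphaFD N g U 0)) W - pairh N (D1p N (M * alphaFD N g U 1)) W
          - pairh N (D2m N (M * alphaFD N g U 2)) W - pairh N (D2p N (M * alphaFD N g U 3)) W := by
        rw [← pairh_neg_left, ← pairh_sub_left, ← pairh_sub_left, ← pairh_sub_left]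
        rfl
    _ = pairh N M (alphaFD N g U 0 * D1p N W + alphaFD N g U 1 * D1m N W
          + alphaFD N g U 2 * D2p N W + alphaFD N g U 3 * D2m N W) := by
        simp only [pairh_D1m_left, pairh_D1p_left, pairh_D2m_left, pairh_D2p_left,
          pairh_mul_left, pairh_add_right]
        ring
    _ = _ := congrArg (pairh N M) (funext₂ fun i j => (fderiv_apply_DHs g U W i j).symm)

end Transport

theorem pairh_hamiltonian_transport_eq {N : ℕ} [NeZero N]
    (g : ZMod N → ZMod N → (Fin 4 → ℝ) → ℝ) (M M' U U' : Grid N) :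
    pairh N (fun i j => g i j (DHs N U' i j) - g i j (DHs N U i j)) (fun i j => M i j - M' i j)
        + pairh N (fun i j => Bh N g U M i j - Bh N g U' M' i j) (fun i j => U i j - U' i j)
      = pairh N M (fun i j => bregmanDiv (g i j) (DHs N U i j) (DHs N U' i j))
        + pairh N M' (fun i j => bregmanDiv (g i j) (DHs N U' i j) (DHs N U i j)) := by
  change _ + pairh N (Bh N g U M - Bh N g U' M') (U - U') = _
  rw [pairh_sub_left, pairh_Bh_left, pairh_Bh_left]
  simp only [pairh, ← mul_add, ← mul_sub, ← Finset.sum_add_distrib, ← Finset.sum_sub_distrib]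
  congr 1
  refine Finset.sum_congr rfl fun i _ => Finset.sum_congr rfl fun j _ => ?_
  simp only [DHs_sub, map_sub, bregmanDiv]
  ring

/-- monotonicity of the coupled Hamiltonian–transport block. -/
theorem hamiltonian_transport_monotone (N : ℕ) [NeZero N]
    (g : ZMod N → ZMod N → (Fin 4 → ℝ) → ℝ)
    (hg1 : ∀ i j, ContDiff ℝ 1 (g i j))
    (hg2 : ∀ i j, ConvexOn ℝ Set.univ (g i j))
    (M M' : Grid N) (hM : ∀ i j, 0 ≤ M i j) (hM' : ∀ i j, 0 ≤ M' i j)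
    (U U' : Grid N) :
    0 ≤ pairh N (fun i j => g i j (DHs N U' i j) - g i j (DHs N U i j))
          (fun i j => M i j - M' i j)
        + pairh N (fun i j => Bh N g U M i j - Bh N g U' M' i j)
          (fun i j => U i j - U' i j) ∧
    ((∀ i j, StrictConvexOn ℝ Set.univ (g i j)) → (∀ i j, 0 < M i j) → (∀ i j, 0 < M' i j) →
      (∃ i j, DHs N U i j ≠ DHs N U' i j) →
      0 < pairh N (fun i j => g i j (DHs N U' i j) - g i j (DHs N U i j))
            (fun i j => M i j - M' i j)
          + pairh N (fun i j => Bh N g U M i j - Bh N g U' M' i j)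
            (fun i j => U i j - U' i j)) := by
  have hdiff : ∀ i j, Differentiable ℝ (g i j) := fun i j => (hg1 i j).differentiable one_ne_zero
  rw [pairh_hamiltonian_transport_eq]
  have hbreg : ∀ V V' : Grid N, ∀ i j, 0 ≤ bregmanDiv (g i j) (DHs N V i j) (DHs N V' i j) :=
    fun V V' i j => (hg2 i j).bregmanDiv_nonneg trivial trivial (hdiff i j _)
  refine ⟨add_nonneg (pairh_nonneg hM (hbreg U U')) (pairh_nonneg hM' (hbreg U' U)), ?_⟩
  rintro hsc hMpos - ⟨i, j, hne⟩
  have hbreg_pos : 0 < bregmanDiv (g i j) (DHs N U i j) (DHs N U' i j) :=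
    (hsc i j).bregmanDiv_pos trivial trivial hne (hdiff i j _)
  exact add_pos_of_pos_of_nonneg (pairh_pos hM (hbreg U U') (hMpos i j) hbreg_pos)
    (pairh_nonneg hM' (hbreg U' U))
end

section
/- Mass conservation along the discrete Hessian–Riemannian flow: let each g_{i,j} be continuously differentiable on ℝ⁴ and suppose Y : [0,S) → (states) is differentiable, has all density components M_k(s) strictly positive componentwise for every s ∈ [0,S), and satisfies the HRF equations on [0,S). Then for each k ∈ {1,…,N_T} the function s ↦ ⟨M_k(s), 1⟩_h is constant on [0,S); in particular, if ⟨M_k(0), 1⟩_h = 1 then ⟨M_k(s), 1⟩_h = 1 for all s ∈ [0,S). -/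
open scoped BigOperators

/-!
Summing the density equation over the grid, the derivative of the mass `⟨M_k, 1⟩_h` is
`-⟨M_k, r_k⟩_h + r̄_k ⟨M_k, 1⟩_h`, which vanishes by the choice of `r̄_k` as the `M_k`-weighted
mean of `r_k`; positivity of `M_k` keeps `⟨M_k, 1⟩_h ≠ 0`, so that `r̄_k` is not a junk quotient.
A function with zero derivative on the interval `[0, S)` is constant there.
-/

open Finset

theorem Convex.eq_of_hasDerivWithinAt_zero {s : Set ℝ} (hs : Convex ℝ s) {F : ℝ → ℝ}
    (hF : ∀ t ∈ s, HasDerivWithinAt F 0 s t) {x y : ℝ} (hx : x ∈ s) (hy : y ∈ s) :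
    F x = F y := by
  have h := hs.norm_image_sub_le_of_norm_hasDerivWithin_le hF (C := 0) (by simp) hx hy
  rw [zero_mul, norm_le_zero_iff, sub_eq_zero] at h
  exact h.symm

theorem gridh_sq_pos (N : ℕ) [NeZero N] : 0 < gridh N ^ 2 := by
  have : (0 : ℝ) < N := by exact_mod_cast Nat.pos_of_ne_zero (NeZero.ne N)
  unfold gridh
  positivity

theorem pairh_one_pos {N : ℕ} [NeZero N] {M : Grid N} (hM : ∀ i j, 0 < M i j) :
    0 < pairh N M (fun _ _ => 1) := by
  refine mul_pos (gridh_sq_pos N) (sum_pos (fun i _ => sum_pos (fun j _ => ?_) univ_nonempty)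
    univ_nonempty)
  simpa only [mul_one] using hM i j

theorem hasDerivWithinAt_pairh {N : ℕ} [NeZero N] {X : ℝ → Grid N} {X' : Grid N}
    {D : Set ℝ} {s : ℝ} (hX : ∀ i j, HasDerivWithinAt (fun t => X t i j) (X' i j) D s)
    (b : Grid N) : HasDerivWithinAt (fun t => pairh N (X t) b) (pairh N X' b) D s :=
  (HasDerivWithinAt.fun_sum fun i _ => HasDerivWithinAt.fun_sum fun j _ =>
    (hX i j).mul_const (b i j)).const_mul _

theorem pairh_neg_mul_sub_const_one {N : ℕ} [NeZero N] (M r : Grid N) (c : ℝ) :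
    pairh N (fun i j => -M i j * (r i j - c)) (fun _ _ => 1) =
      c * pairh N M (fun _ _ => 1) - pairh N M r := by
  simp only [pairh, mul_one, neg_mul, mul_sub, sum_neg_distrib, sum_sub_distrib, ← sum_mul]
  ring

theorem pairh_neg_mul_sub_weightedMean_one {N : ℕ} [NeZero N] {M : Grid N}
    (hM : pairh N M (fun _ _ => 1) ≠ 0) (r : Grid N) :
    pairh N (fun i j => -M i j * (r i j - pairh N M r / pairh N M (fun _ _ => 1)))
      (fun _ _ => 1) = 0 := by
  rw [pairh_neg_mul_sub_const_one, div_mul_cancel₀ _ hM, sub_self]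

theorem hrf_mass_conservation_general (N : ℕ) [NeZero N] (NT : ℕ)
    (Δt ν : ℝ)
    (g : ZMod N → ZMod N → (Fin 4 → ℝ) → ℝ)
    (f : ℝ → ℝ) (Vh : Grid N)
    (S : ℝ) (hS : 0 < S)
    (Ms Us : ℝ → ℕ → Grid N)
    (hposflow : ∀ s ∈ Set.Ico (0 : ℝ) S, ∀ k ∈ Finset.Icc 1 NT, ∀ i j, 0 < Ms s k i j)
    (hflow : IsHRFOn N NT g f Vh ν Δt Ms Us (Set.Ico 0 S)) :
    ∀ k ∈ Finset.Icc 1 NT,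
      (∀ s ∈ Set.Ico (0 : ℝ) S, ∀ s' ∈ Set.Ico (0 : ℝ) S,
        pairh N (Ms s k) (fun _ _ => 1) = pairh N (Ms s' k) (fun _ _ => 1)) ∧
      (pairh N (Ms 0 k) (fun _ _ => 1) = 1 →
        ∀ s ∈ Set.Ico (0 : ℝ) S, pairh N (Ms s k) (fun _ _ => 1) = 1) := by
  intro k hk
  have hmass_deriv : ∀ s ∈ Set.Ico (0 : ℝ) S,
      HasDerivWithinAt (fun t => pairh N (Ms t k) (fun _ _ => 1)) 0 (Set.Ico 0 S) s := by
    intro s hs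
    have hmass_ne := (pairh_one_pos (hposflow s hs k hk)).ne'
    simpa only [rbarFD, pairh_neg_mul_sub_weightedMean_one hmass_ne] using
      hasDerivWithinAt_pairh (hflow s hs k hk).1 (fun _ _ => 1)
  have hconst : ∀ s ∈ Set.Ico (0 : ℝ) S, ∀ s' ∈ Set.Ico (0 : ℝ) S,
      pairh N (Ms s k) (fun _ _ => 1) = pairh N (Ms s' k) (fun _ _ => 1) :=
    fun s hs s' hs' => (convex_Ico 0 S).eq_of_hasDerivWithinAt_zero hmass_deriv hs hs'
  exact ⟨hconst, fun h0 s hs => (hconst s hs 0 ⟨le_rfl, hS⟩).trans h0⟩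

/-- mass conservation along the discrete Hessian–Riemannian flow. -/
theorem hrf_mass_conservation (N : ℕ) [NeZero N] (NT : ℕ) (hNT : 1 ≤ NT)
    (Δt ν : ℝ) (hΔt : 0 < Δt) (hν : 0 ≤ ν)
    (g : ZMod N → ZMod N → (Fin 4 → ℝ) → ℝ)
    (hg : ∀ i j, ContDiff ℝ 1 (g i j))
    (f : ℝ → ℝ) (Vh : Grid N)
    (S : ℝ) (hS : 0 < S)
    (Ms Us : ℝ → ℕ → Grid N)
    (hposflow : ∀ s ∈ Set.Ico (0 : ℝ) S, ∀ k ∈ Finset.Icc 1 NT, ∀ i j, 0 < Ms s k i j)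
    (hflow : IsHRFOn N NT g f Vh ν Δt Ms Us (Set.Ico 0 S)) :
    ∀ k ∈ Finset.Icc 1 NT,
      (∀ s ∈ Set.Ico (0 : ℝ) S, ∀ s' ∈ Set.Ico (0 : ℝ) S,
        pairh N (Ms s k) (fun _ _ => 1) = pairh N (Ms s' k) (fun _ _ => 1)) ∧
      (pairh N (Ms 0 k) (fun _ _ => 1) = 1 →
        ∀ s ∈ Set.Ico (0 : ℝ) S, pairh N (Ms s k) (fun _ _ => 1) = 1) :=
  hrf_mass_conservation_general N NT Δt ν g f Vh S hS Ms Us hposflow hflow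
end

section
/- Decomposition and coercivity of the entropy Bregman divergence: fix Y* ∈ M_h. For every Y ∈ M_h one has D_E(Y*,Y) = Δt Σ_{k=1}^{N_T} Σ_{i,j} h² [ (M*_k)_{i,j} log((M*_k)_{i,j}/(M_k)_{i,j}) − (M*_k)_{i,j} + (M_k)_{i,j} ] + (Δt/2) Σ_{k=0}^{N_T−1} ⟨U*_k − U_k, U*_k − U_k⟩_h, and every summand is nonnegative, so D_E(Y*,Y) ≥ 0. Moreover, for every C ≥ 0 there exists c > 0 such that every Y ∈ M_h with D_E(Y*,Y) ≤ C satisfies (M_k)_{i,j} ≥ c for all k ∈ {1,…,N_T} and all nodes (i,j), and ⟨U*_k − U_k, U*_k − U_k⟩_h ≤ 2C/Δt for all k ∈ {0,…,N_T−1}. -/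
open scoped BigOperators

lemma pt_eq (a b : ℝ) (ha : 0 < a) (hb : 0 < b) :
    a * (Real.log a - 1) - b * (Real.log b - 1) - Real.log b * (a - b)
      = a * Real.log (a / b) - a + b := by
  rw [Real.log_div ha.ne' hb.ne']; ring

lemma pt_nonneg (a b : ℝ) (ha : 0 < a) (hb : 0 < b) :
    0 ≤ a * Real.log (a / b) - a + b := by
  have h1 : Real.log (b / a) ≤ b / a - 1 := Real.log_le_sub_one_of_pos (div_pos hb ha)
  have h2 : Real.log (a / b) = -Real.log (b / a) := by
    rw [← Real.log_inv]; congr 1; field_simp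
  have h3 : a * (b / a) = b := by field_simp
  nlinarith [mul_le_mul_of_nonneg_left h1 ha.le]

lemma lbM (a b K mlo : ℝ) (ha : 0 < a) (hb : 0 < b) (hm : 0 < mlo) (hma : mlo ≤ a)
    (hK : 0 ≤ K) (h : a * Real.log (a / b) - a + b ≤ K) :
    mlo * Real.exp (-(K / mlo + 1)) ≤ b := by
  have h1 : Real.log (a / b) ≤ K / mlo + 1 := by
    have ha' : a * Real.log (a / b) ≤ K + a := by linarith
    have h2 : Real.log (a / b) ≤ (K + a) / a := by
      rw [le_div_iff₀ ha]; linarith [ha']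
    have h3 : (K + a) / a = K / a + 1 := by field_simp
    have h4 : K / a ≤ K / mlo := by gcongr
    linarith [h2, h3 ▸ h2]
  have h4 : a / b ≤ Real.exp (K / mlo + 1) := by
    calc a / b = Real.exp (Real.log (a / b)) := (Real.exp_log (div_pos ha hb)).symm
      _ ≤ _ := Real.exp_le_exp.mpr h1
  have hepos := Real.exp_pos (K / mlo + 1)
  have h5 : a * Real.exp (-(K / mlo + 1)) ≤ b := by
    rw [Real.exp_neg, ← div_eq_mul_inv, div_le_iff₀ hepos]
    rw [div_le_iff₀ hb] at h4
    nlinarith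
  calc mlo * Real.exp (-(K / mlo + 1)) ≤ a * Real.exp (-(K / mlo + 1)) := by
        exact mul_le_mul_of_nonneg_right hma (Real.exp_pos _).le
    _ ≤ b := h5

lemma pairh_self_nonneg (N : ℕ) [NeZero N] (v : Grid N) : 0 ≤ pairh N v v := by
  unfold pairh
  apply mul_nonneg (by positivity)
  exact Finset.sum_nonneg fun i _ => Finset.sum_nonneg fun j _ => mul_self_nonneg _

/-- decomposition and coercivity of the entropy Bregman divergence. -/
theorem bregman_decomposition_coercivity (N : ℕ) [NeZero N] (NT : ℕ) (hNT : 1 ≤ NT)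
    (Δt : ℝ) (hΔt : 0 < Δt)
    (Mstar Ustar : ℕ → Grid N)
    (hstar : ∀ k ∈ Finset.Icc 1 NT,
      (∀ i j, 0 < Mstar k i j) ∧ pairh N (Mstar k) (fun _ _ => 1) = 1) :
    (∀ M U : ℕ → Grid N,
      (∀ k ∈ Finset.Icc 1 NT, (∀ i j, 0 < M k i j) ∧ pairh N (M k) (fun _ _ => 1) = 1) →
      (DE N NT Δt Mstar Ustar M U
          = Δt * ∑ k ∈ Finset.Icc 1 NT, ∑ i : ZMod N, ∑ j : ZMod N,
              gridh N ^ 2 * (Mstar k i j * Real.log (Mstar k i j / M k i j)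
                - Mstar k i j + M k i j)
            + Δt / 2 * ∑ k ∈ Finset.range NT,
              pairh N (fun i j => Ustar k i j - U k i j) (fun i j => Ustar k i j - U k i j)) ∧
      (∀ k ∈ Finset.Icc 1 NT, ∀ i j,
        0 ≤ Mstar k i j * Real.log (Mstar k i j / M k i j) - Mstar k i j + M k i j) ∧
      0 ≤ DE N NT Δt Mstar Ustar M U) ∧
    (∀ C : ℝ, 0 ≤ C → ∃ c > (0 : ℝ), ∀ M U : ℕ → Grid N,
      (∀ k ∈ Finset.Icc 1 NT, (∀ i j, 0 < M k i j) ∧ pairh N (M k) (fun _ _ => 1) = 1) →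
      DE N NT Δt Mstar Ustar M U ≤ C →
      (∀ k ∈ Finset.Icc 1 NT, ∀ i j, c ≤ M k i j) ∧
      (∀ k ∈ Finset.range NT,
        pairh N (fun i j => Ustar k i j - U k i j) (fun i j => Ustar k i j - U k i j)
          ≤ 2 * C / Δt)) := by
  have hN : (0:ℝ) < (N:ℝ) := by
    exact_mod_cast Nat.pos_of_ne_zero (NeZero.ne N)
  have h2pos : (0:ℝ) < gridh N ^ 2 := by unfold gridh; positivity
  have main : ∀ M U : ℕ → Grid N,
      (∀ k ∈ Finset.Icc 1 NT, (∀ i j, 0 < M k i j) ∧ pairh N (M k) (fun _ _ => 1) = 1) →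
      (DE N NT Δt Mstar Ustar M U
          = Δt * ∑ k ∈ Finset.Icc 1 NT, ∑ i : ZMod N, ∑ j : ZMod N,
              gridh N ^ 2 * (Mstar k i j * Real.log (Mstar k i j / M k i j)
                - Mstar k i j + M k i j)
            + Δt / 2 * ∑ k ∈ Finset.range NT,
              pairh N (fun i j => Ustar k i j - U k i j) (fun i j => Ustar k i j - U k i j)) ∧
      (∀ k ∈ Finset.Icc 1 NT, ∀ i j,
        0 ≤ Mstar k i j * Real.log (Mstar k i j / M k i j) - Mstar k i j + M k i j) ∧
      0 ≤ DE N NT Δt Mstar Ustar M U := by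
    intro M U hM
    have hpt : ∀ k ∈ Finset.Icc 1 NT, ∀ i j,
        0 ≤ Mstar k i j * Real.log (Mstar k i j / M k i j) - Mstar k i j + M k i j :=
      fun k hk i j => pt_nonneg _ _ ((hstar k hk).1 i j) ((hM k hk).1 i j)
    have hdec : DE N NT Δt Mstar Ustar M U
        = Δt * ∑ k ∈ Finset.Icc 1 NT, ∑ i : ZMod N, ∑ j : ZMod N,
            gridh N ^ 2 * (Mstar k i j * Real.log (Mstar k i j / M k i j)
              - Mstar k i j + M k i j)
          + Δt / 2 * ∑ k ∈ Finset.range NT,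
            pairh N (fun i j => Ustar k i j - U k i j) (fun i j => Ustar k i j - U k i j) := by
      have e1 : DE N NT Δt Mstar Ustar M U
          = Δt * ∑ k ∈ Finset.Icc 1 NT,
              (pairh N (Mstar k) (fun i j => Real.log (Mstar k i j) - 1)
                - pairh N (M k) (fun i j => Real.log (M k i j) - 1)
                - pairh N (fun i j => Real.log (M k i j)) (fun i j => Mstar k i j - M k i j))
            + Δt / 2 * ∑ k ∈ Finset.range NT,
              (pairh N (Ustar k) (Ustar k) - pairh N (U k) (U k)
                - 2 * pairh N (U k) (fun i j => Ustar k i j - U k i j)) := by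
        simp only [DE, entE, Finset.sum_sub_distrib, ← Finset.mul_sum]
        ring
      rw [e1]
      congr 1
      · congr 1
        apply Finset.sum_congr rfl
        intro k hk
        have h1 := (hstar k hk).1
        have h2 := (hM k hk).1
        have hR : (∑ i : ZMod N, ∑ j : ZMod N,
            gridh N ^ 2 * (Mstar k i j * Real.log (Mstar k i j / M k i j)
              - Mstar k i j + M k i j))
            = ∑ i : ZMod N, ∑ j : ZMod N,
              (gridh N ^ 2 * (Mstar k i j * (Real.log (Mstar k i j) - 1))
                - gridh N ^ 2 * (M k i j * (Real.log (M k i j) - 1))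
                - gridh N ^ 2 * (Real.log (M k i j) * (Mstar k i j - M k i j))) := by
          refine Finset.sum_congr rfl fun i _ => Finset.sum_congr rfl fun j _ => ?_
          rw [← pt_eq _ _ (h1 i j) (h2 i j)]; ring
        rw [hR]
        simp only [pairh, Finset.sum_sub_distrib, ← Finset.mul_sum]
      · congr 1
        apply Finset.sum_congr rfl
        intro k _
        have hR : (∑ i : ZMod N, ∑ j : ZMod N,
            (Ustar k i j - U k i j) * (Ustar k i j - U k i j))
            = ∑ i : ZMod N, ∑ j : ZMod N,
              (Ustar k i j * Ustar k i j - U k i j * U k i j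
                - 2 * (U k i j * (Ustar k i j - U k i j))) :=
          Finset.sum_congr rfl fun i _ => Finset.sum_congr rfl fun j _ => by ring
        simp only [pairh]
        rw [hR]
        simp only [Finset.sum_sub_distrib, ← Finset.mul_sum]
        ring
    refine ⟨hdec, hpt, ?_⟩
    rw [hdec]
    have hA : 0 ≤ Δt * ∑ k ∈ Finset.Icc 1 NT, ∑ i : ZMod N, ∑ j : ZMod N,
        gridh N ^ 2 * (Mstar k i j * Real.log (Mstar k i j / M k i j)
          - Mstar k i j + M k i j) :=
      mul_nonneg hΔt.le (Finset.sum_nonneg fun k hk => Finset.sum_nonneg fun i _ =>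
        Finset.sum_nonneg fun j _ => mul_nonneg h2pos.le (hpt k hk i j))
    have hB : 0 ≤ Δt / 2 * ∑ k ∈ Finset.range NT,
        pairh N (fun i j => Ustar k i j - U k i j) (fun i j => Ustar k i j - U k i j) :=
      mul_nonneg (by linarith) (Finset.sum_nonneg fun k _ => pairh_self_nonneg N _)
    linarith
  refine ⟨main, ?_⟩
  intro C hC
  have hne : ((Finset.Icc 1 NT) ×ˢ ((Finset.univ : Finset (ZMod N)) ×ˢ
      (Finset.univ : Finset (ZMod N)))).Nonempty := by
    refine Finset.Nonempty.product ⟨1, by simp [hNT]⟩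
      (Finset.Nonempty.product ⟨0, Finset.mem_univ 0⟩ ⟨0, Finset.mem_univ 0⟩)
  set mlo := ((Finset.Icc 1 NT) ×ˢ ((Finset.univ : Finset (ZMod N)) ×ˢ
      (Finset.univ : Finset (ZMod N)))).inf' hne (fun p => Mstar p.1 p.2.1 p.2.2) with hmlo
  have hmlo_pos : 0 < mlo := by
    rw [hmlo, Finset.lt_inf'_iff]
    rintro ⟨k, i, j⟩ hp
    simp only [Finset.mem_product] at hp
    exact (hstar k hp.1).1 i j
  have hmlo_le : ∀ k ∈ Finset.Icc 1 NT, ∀ i j : ZMod N, mlo ≤ Mstar k i j := by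
    intro k hk i j
    have hmem : (k, (i, j)) ∈ (Finset.Icc 1 NT) ×ˢ ((Finset.univ : Finset (ZMod N)) ×ˢ
        (Finset.univ : Finset (ZMod N))) := by
      simp [Finset.mem_product, hk]
    exact Finset.inf'_le _ hmem
  set K := C / (Δt * gridh N ^ 2) with hKdef
  have hKn : 0 ≤ K := div_nonneg hC (by positivity)
  refine ⟨mlo * Real.exp (-(K / mlo + 1)), by positivity, ?_⟩
  intro M U hM hDE
  obtain ⟨heq, hpt, _⟩ := main M U hM
  have hterm : ∀ k ∈ Finset.Icc 1 NT, ∀ i : ZMod N, ∀ j : ZMod N,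
      0 ≤ gridh N ^ 2 * (Mstar k i j * Real.log (Mstar k i j / M k i j)
        - Mstar k i j + M k i j) :=
    fun k hk i j => mul_nonneg h2pos.le (hpt k hk i j)
  have hA : 0 ≤ Δt * ∑ k ∈ Finset.Icc 1 NT, ∑ i : ZMod N, ∑ j : ZMod N,
      gridh N ^ 2 * (Mstar k i j * Real.log (Mstar k i j / M k i j)
        - Mstar k i j + M k i j) :=
    mul_nonneg hΔt.le (Finset.sum_nonneg fun k hk => Finset.sum_nonneg fun i _ =>
      Finset.sum_nonneg fun j _ => hterm k hk i j)
  have hB : 0 ≤ Δt / 2 * ∑ k ∈ Finset.range NT,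
      pairh N (fun i j => Ustar k i j - U k i j) (fun i j => Ustar k i j - U k i j) :=
    mul_nonneg (by linarith) (Finset.sum_nonneg fun k _ => pairh_self_nonneg N _)
  rw [heq] at hDE
  constructor
  · intro k hk i j
    have hs1 : gridh N ^ 2 * (Mstar k i j * Real.log (Mstar k i j / M k i j)
          - Mstar k i j + M k i j)
        ≤ ∑ j' : ZMod N, gridh N ^ 2 * (Mstar k i j' * Real.log (Mstar k i j' / M k i j')
          - Mstar k i j' + M k i j') :=
      Finset.single_le_sum (fun j' _ => hterm k hk i j') (Finset.mem_univ j)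
    have hs2 : (∑ j' : ZMod N, gridh N ^ 2 * (Mstar k i j' * Real.log (Mstar k i j' / M k i j')
          - Mstar k i j' + M k i j'))
        ≤ ∑ i' : ZMod N, ∑ j' : ZMod N,
            gridh N ^ 2 * (Mstar k i' j' * Real.log (Mstar k i' j' / M k i' j')
              - Mstar k i' j' + M k i' j') :=
      Finset.single_le_sum (fun i' _ => Finset.sum_nonneg fun j' _ => hterm k hk i' j')
        (Finset.mem_univ i)
    have hs3 : (∑ i' : ZMod N, ∑ j' : ZMod N,
          gridh N ^ 2 * (Mstar k i' j' * Real.log (Mstar k i' j' / M k i' j')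
            - Mstar k i' j' + M k i' j'))
        ≤ ∑ k' ∈ Finset.Icc 1 NT, ∑ i' : ZMod N, ∑ j' : ZMod N,
            gridh N ^ 2 * (Mstar k' i' j' * Real.log (Mstar k' i' j' / M k' i' j')
              - Mstar k' i' j' + M k' i' j') :=
      Finset.single_le_sum (fun k' hk' => Finset.sum_nonneg fun i' _ =>
        Finset.sum_nonneg fun j' _ => hterm k' hk' i' j') hk
    have h6 := le_trans hs1 (le_trans hs2 hs3)
    have h7 := mul_le_mul_of_nonneg_left h6 hΔt.le
    have hbig : Δt * (gridh N ^ 2 * (Mstar k i j * Real.log (Mstar k i j / M k i j)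
        - Mstar k i j + M k i j)) ≤ C := by linarith
    have hphi : Mstar k i j * Real.log (Mstar k i j / M k i j) - Mstar k i j + M k i j ≤ K := by
      rw [hKdef, le_div_iff₀ (by positivity)]
      nlinarith [hbig]
    exact lbM (Mstar k i j) (M k i j) K mlo ((hstar k hk).1 i j) ((hM k hk).1 i j)
      hmlo_pos (hmlo_le k hk i j) hKn hphi
  · intro k hk
    have hs : pairh N (fun i j => Ustar k i j - U k i j) (fun i j => Ustar k i j - U k i j)
        ≤ ∑ k' ∈ Finset.range NT,
            pairh N (fun i j => Ustar k' i j - U k' i j) (fun i j => Ustar k' i j - U k' i j) :=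
      Finset.single_le_sum (f := fun k' => pairh N (fun i j => Ustar k' i j - U k' i j)
        (fun i j => Ustar k' i j - U k' i j)) (fun k' _ => pairh_self_nonneg N _) hk
    have h7 := mul_le_mul_of_nonneg_left hs (by linarith : (0:ℝ) ≤ Δt / 2)
    rw [le_div_iff₀ hΔt]
    nlinarith [h7, hA, hDE]
end
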